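/- Let H = (V,H) be a boolean representable simplicial complex, τ ⊆ η an equivalence relation with projection φ, and H/τ the quotient complex. For distinct classes vτ ≠ wτ: v—w is an edge of the graph of flats of H if and only if vτ—wτ is an edge of the graph of flats of H/τ. -/

import Mathlib

open scoped Classical

variable {V : Type}

def IsSC (faces : Set (Finset V)) : Prop :=
  (∀ v : V, ({v} : Finset V) ∈ faces) ∧
    ∀ ⦃X Y : Finset V⦄, X ∈ faces → Y ⊆ X → Y ∈ faces

def IsFlat (faces : Set (Finset V)) (F : Set V) : Prop :=
  ∀ I ∈ faces, (I : Set V) ⊆ F → ∀ p ∉ F, insert p I ∈ faces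

def cl (faces : Set (Finset V)) (X : Set V) : Set V :=
  ⋂₀ {F : Set V | IsFlat faces F ∧ X ⊆ F}

def BRep (faces : Set (Finset V)) : Prop :=
  ∀ X ∈ faces, ∃ (k : ℕ) (F : Fin (k + 1) → Set V) (x : Fin k → V),
    (∀ i, IsFlat faces (F i)) ∧ StrictMono F ∧ Function.Injective x ∧
    (∀ i : Fin k, x i ∈ F i.succ \ F i.castSucc) ∧
    X = Finset.image x Finset.univ

def skel (faces : Set (Finset V)) : SimpleGraph V where
  Adj p q := p ≠ q ∧ ({p, q} : Finset V) ∈ faces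
  symm := ⟨by
    rintro p q ⟨h1, h2⟩
    exact ⟨h1.symm, by rwa [Finset.pair_comm]⟩⟩
  loopless := ⟨by rintro p ⟨h, _⟩; exact h rfl⟩

def flatGraph (faces : Set (Finset V)) : SimpleGraph V where
  Adj p q := p ≠ q ∧ cl faces {p, q} ≠ Set.univ
  symm := ⟨by
    rintro p q ⟨h1, h2⟩
    exact ⟨h1.symm, by rwa [Set.pair_comm]⟩⟩
  loopless := ⟨by rintro p ⟨h, _⟩; exact h rfl⟩

def quotFaces (faces : Set (Finset V)) (τ : Setoid V) :
    Set (Finset (Quotient τ)) :=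
  {Y | ∃ X ∈ faces, Y = X.image (Quotient.mk τ)}

/-! Every flat is a union of `η`-classes, hence of `τ`-classes, so the projection `φ` sends flats
of `H` to flats of `H/τ`. Conversely the preimage of a flat of `H/τ` is a flat of `H`: a chain of
flats witnessing a face of `H` also witnesses every set obtained by replacing its vertices by
vertices with the same closure, and this lifts faces of `H/τ` to faces of `H` with one vertex in
each class. Hence `cl S = φ⁻¹ (cl (φ S))`, and as `φ` is surjective, `cl {v, w}` is all of `V`
exactly when `cl {vτ, wτ}` is all of `V/τ`. -/

lemma subset_cl (faces : Set (Finset V)) (S : Set V) : S ⊆ cl faces S :=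
  fun _ ha _ hF => hF.2 ha

lemma cl_subset_of_isFlat {faces : Set (Finset V)} {S F : Set V} (hF : IsFlat faces F)
    (hS : S ⊆ F) : cl faces S ⊆ F :=
  Set.sInter_subset_of_mem ⟨hF, hS⟩

lemma isFlat_cl (faces : Set (Finset V)) (S : Set V) : IsFlat faces (cl faces S) := by
  intro I hI hIS p hp
  obtain ⟨F, hF, hSF, hpF⟩ : ∃ F, IsFlat faces F ∧ S ⊆ F ∧ p ∉ F := by
    simpa [cl] using hp
  exact hF I hI (hIS.trans (Set.sInter_subset_of_mem ⟨hF, hSF⟩)) p hpF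

lemma IsFlat.mem_of_cl_singleton_eq {faces : Set (Finset V)} {F : Set V} (hF : IsFlat faces F)
    {a b : V} (hab : cl faces {a} = cl faces {b}) (ha : a ∈ F) : b ∈ F :=
  cl_subset_of_isFlat hF (Set.singleton_subset_iff.2 ha) (hab ▸ subset_cl faces {b} rfl)

lemma image_mem_of_isFlat_chain {faces : Set (Finset V)} (hempty : ∅ ∈ faces) :
    ∀ {k : ℕ} {F : Fin (k + 1) → Set V} {x : Fin k → V}, (∀ i, IsFlat faces (F i)) →
      Monotone F → (∀ i, x i ∈ F i.succ \ F i.castSucc) → Finset.univ.image x ∈ faces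
  | 0, _, _, _, _, _ => by simpa using hempty
  | k + 1, F, x, hF, hmono, hx => by
    have hprefix : Finset.univ.image (x ∘ Fin.castSucc) ∈ faces :=
      image_mem_of_isFlat_chain hempty (fun i => hF i.castSucc)
        (hmono.comp Fin.strictMono_castSucc.monotone)
        (fun i => Fin.succ_castSucc i ▸ hx i.castSucc)
    have hsub : (Finset.univ.image (x ∘ Fin.castSucc) : Set V) ⊆ F (Fin.last k).castSucc := by
      simp only [Finset.coe_image, Finset.coe_univ, Set.image_univ, Set.range_subset_iff]
      exact fun i => hmono (Fin.succ_le_castSucc_iff.2 (Fin.castSucc_lt_last i)) (hx i.castSucc).1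
    convert hF _ _ hprefix hsub _ (hx (Fin.last k)).2 using 1
    ext a
    simp [Fin.exists_fin_succ', or_comm, eq_comm]

lemma BRep.injOn_cl_singleton {faces : Set (Finset V)} (hbr : BRep faces) {X : Finset V}
    (hX : X ∈ faces) : Set.InjOn (fun a => cl faces {a}) X := by
  obtain ⟨k, F, x, hF, hmono, -, hx, rfl⟩ := hbr X hX
  have hlt : ∀ i j, i < j → cl faces {x i} ≠ cl faces {x j} := fun i j hij h =>
    (hx j).2 ((hF _).mem_of_cl_singleton_eq h
      (hmono.monotone (Fin.succ_le_castSucc_iff.2 hij) (hx i).1))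
  simp only [Finset.coe_image, Finset.coe_univ, Set.image_univ]
  rintro _ ⟨i, rfl⟩ _ ⟨j, rfl⟩ h
  rcases lt_trichotomy i j with hij | rfl | hij
  · exact absurd h (hlt i j hij)
  · rfl
  · exact absurd h.symm (hlt j i hij)

lemma BRep.image_mem_of_cl_singleton_eq {faces : Set (Finset V)} (hsc : IsSC faces)
    (hbr : BRep faces) {X : Finset V} (hX : X ∈ faces) {g : V → V}
    (hg : ∀ a ∈ X, cl faces {g a} = cl faces {a}) : X.image g ∈ faces := by
  obtain ⟨k, F, x, hF, hmono, -, hx, rfl⟩ := hbr X hX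
  have hgx : ∀ i, cl faces {g (x i)} = cl faces {x i} := fun i =>
    hg _ (Finset.mem_image_of_mem _ (Finset.mem_univ i))
  rw [Finset.image_image]
  refine image_mem_of_isFlat_chain (hsc.2 hX (Finset.empty_subset _)) hF hmono.monotone
    fun i => ⟨(hF _).mem_of_cl_singleton_eq (hgx i).symm (hx i).1, fun h => ?_⟩
  exact (hx i).2 ((hF _).mem_of_cl_singleton_eq (hgx i) h)

section Quotient

variable {faces : Set (Finset V)} {τ : Setoid V}

lemma IsFlat.preimage_image_mk (hτ : ∀ a b : V, τ.r a b → cl faces {a} = cl faces {b})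
    {F : Set V} (hF : IsFlat faces F) : Quotient.mk τ ⁻¹' (Quotient.mk τ '' F) = F := by
  refine Set.Subset.antisymm ?_ (Set.subset_preimage_image _ _)
  rintro b ⟨a, ha, hab⟩
  exact hF.mem_of_cl_singleton_eq (hτ a b (Quotient.exact hab)) ha

lemma IsFlat.image_mk (hτ : ∀ a b : V, τ.r a b → cl faces {a} = cl faces {b})
    {F : Set V} (hF : IsFlat faces F) : IsFlat (quotFaces faces τ) (Quotient.mk τ '' F) := by
  rintro _ ⟨X, hX, rfl⟩ hXF q hq
  obtain ⟨u, rfl⟩ := Quotient.mk_surjective q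
  have hXF' : (X : Set V) ⊆ F := by
    rw [← hF.preimage_image_mk hτ, ← Set.image_subset_iff]
    simpa using hXF
  have hu : u ∉ F := fun hu => hq ⟨u, hu, rfl⟩
  exact ⟨insert u X, hF X hX hXF' u hu, by ext; simp⟩

lemma mem_of_image_mk_eq (hsc : IsSC faces) (hbr : BRep faces)
    (hτ : ∀ a b : V, τ.r a b → cl faces {a} = cl faces {b}) {Z X : Finset V} (hZ : Z ∈ faces)
    (hX : Set.InjOn (Quotient.mk τ) X) (h : Z.image (Quotient.mk τ) = X.image (Quotient.mk τ)) :
    X ∈ faces := by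
  rcases X.eq_empty_or_nonempty with rfl | ⟨a, -⟩
  · exact hsc.2 hZ (Finset.empty_subset _)
  have : Nonempty V := ⟨a⟩
  -- replace each vertex of `Z` by the vertex of `X` in its class
  let g := Function.invFunOn (Quotient.mk τ) X ∘ Quotient.mk τ
  have hg : ∀ z ∈ Z, Quotient.mk τ (g z) = Quotient.mk τ z := fun z hz => by
    obtain ⟨y, hy, hyz⟩ := Finset.mem_image.1 (h ▸ Finset.mem_image_of_mem _ hz)
    exact Function.invFunOn_eq ⟨y, hy, hyz⟩
  have hgZ : Z.image g = X := by
    apply Finset.coe_injective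
    rw [Finset.coe_image, Set.image_comp, ← Finset.coe_image, h, Finset.coe_image,
      hX.invFunOn_image subset_rfl]
  rw [← hgZ]
  exact hbr.image_mem_of_cl_singleton_eq hsc hZ fun z hz => hτ _ _ (Quotient.exact (hg z hz))

lemma IsFlat.preimage_mk (hsc : IsSC faces) (hbr : BRep faces)
    (hτ : ∀ a b : V, τ.r a b → cl faces {a} = cl faces {b}) {F' : Set (Quotient τ)}
    (hF' : IsFlat (quotFaces faces τ) F') : IsFlat faces (Quotient.mk τ ⁻¹' F') := by
  intro I hI hIF p hp
  have hIF' : ((I.image (Quotient.mk τ) : Finset (Quotient τ)) : Set (Quotient τ)) ⊆ F' := by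
    simpa [Set.image_subset_iff] using hIF
  obtain ⟨Z, hZ, hZI⟩ := hF' _ ⟨I, hI, rfl⟩ hIF' _ hp
  refine mem_of_image_mk_eq hsc hbr hτ hZ ?_ (by ext; simp [← hZI])
  rw [Finset.coe_insert, Set.injOn_insert fun h => hp (hIF h)]
  refine ⟨fun a ha b hb hab => hbr.injOn_cl_singleton hI ha hb (hτ a b (Quotient.exact hab)), ?_⟩
  rintro ⟨a, ha, hap⟩
  exact hp (show Quotient.mk τ p ∈ F' from hap ▸ hIF ha)

lemma preimage_cl_quotFaces_image (hsc : IsSC faces) (hbr : BRep faces)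
    (hτ : ∀ a b : V, τ.r a b → cl faces {a} = cl faces {b}) (S : Set V) :
    Quotient.mk τ ⁻¹' cl (quotFaces faces τ) (Quotient.mk τ '' S) = cl faces S := by
  have hcl := isFlat_cl faces S
  refine Set.Subset.antisymm ?_ ?_
  · refine (Set.preimage_mono ?_).trans (hcl.preimage_image_mk hτ).le
    exact cl_subset_of_isFlat (hcl.image_mk hτ) (Set.image_mono (subset_cl faces S))
  · exact cl_subset_of_isFlat ((isFlat_cl _ _).preimage_mk hsc hbr hτ)
      (Set.image_subset_iff.1 (subset_cl _ _))

end Quotient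

theorem flatGraph_edge_iff_quot_general
    {faces : Set (Finset V)} (hsc : IsSC faces) (hbr : BRep faces)
    (τ : Setoid V) (hτ : ∀ a b : V, τ.r a b → cl faces {a} = cl faces {b})
    (v w : V) (hvw : Quotient.mk τ v ≠ Quotient.mk τ w) :
    (flatGraph faces).Adj v w ↔
      (flatGraph (quotFaces faces τ)).Adj (Quotient.mk τ v) (Quotient.mk τ w) := by
  have hcl := preimage_cl_quotFaces_image hsc hbr hτ {v, w}
  rw [Set.image_pair] at hcl
  refine and_congr (iff_of_true (fun h => hvw (congrArg _ h)) hvw) ?_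
  rw [← hcl, Quotient.mk_surjective.preimage_injective.ne_iff' Set.preimage_univ]

theorem flatGraph_edge_iff_quot [Fintype V] [Nonempty V]
    {faces : Set (Finset V)} (hsc : IsSC faces) (hbr : BRep faces)
    (τ : Setoid V) (hτ : ∀ a b : V, τ.r a b → cl faces {a} = cl faces {b})
    (v w : V) (hvw : Quotient.mk τ v ≠ Quotient.mk τ w) :
    (flatGraph faces).Adj v w ↔
      (flatGraph (quotFaces faces τ)).Adj (Quotient.mk τ v) (Quotient.mk τ w) :=
  flatGraph_edge_iff_quot_general hsc hbr τ hτ v w hvw
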